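/- Let r ≥ 1 and k ≥ 3 be integers and let G = (V,E) be a finite simple graph. Then m_e(G □ C_k, r) ≤ m_e(G,r) + (k−2)·m_e(G,r−1) + m_e(G,r−2) + d_{r−1}(G) + k·(d_0(G) + d_1(G) + … + d_{r−2}(G)), where the term m_e(G,r−2) is interpreted as 0 when r = 1 and the sum d_0 + … + d_{r−2} is empty when r = 1. -/

import Mathlib

open Polynomial

/-- A set `S` of edges is closed under the `r`-bond bootstrap infection rule: whenever a
vertex `v` is incident to at least `r` edges in `S`, all edges incident to `v` are in `S`. -/
def BondClosed {V : Type*} (G : SimpleGraph V) (r : ℕ) (S : Set (Sym2 V)) : Prop :=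
  ∀ v : V, r ≤ {u | G.Adj v u ∧ s(v, u) ∈ S}.ncard → ∀ w : V, G.Adj v w → s(v, w) ∈ S

/-- `F` percolates in the `r`-bond bootstrap process on `G`: every set of edges containing `F`
that is closed under the infection rule contains all edges of `G`. -/
def BondPercolates {V : Type*} (G : SimpleGraph V) (r : ℕ) (F : Set (Sym2 V)) : Prop :=
  ∀ S : Set (Sym2 V), F ⊆ S → BondClosed G r S → G.edgeSet ⊆ S

/-- `mEdge G r` is the minimum size of a set of edges of `G` percolating in the `r`-bond
bootstrap process, i.e. `m_e(G,r)`. -/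
noncomputable def mEdge {V : Type*} (G : SimpleGraph V) (r : ℕ) : ℕ :=
  sInf {n | ∃ F : Finset (Sym2 V), ↑F ⊆ G.edgeSet ∧ BondPercolates G r ↑F ∧ F.card = n}

/-- A set `S` of vertices is closed under the `r`-neighbour bootstrap infection rule. -/
def NeighClosed {V : Type*} (G : SimpleGraph V) (r : ℕ) (S : Set V) : Prop :=
  ∀ v : V, r ≤ {u | G.Adj v u ∧ u ∈ S}.ncard → v ∈ S

/-- `A` percolates in the `r`-neighbour bootstrap process on `G`. -/
def NeighPercolates {V : Type*} (G : SimpleGraph V) (r : ℕ) (A : Set V) : Prop :=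
  ∀ S : Set V, A ⊆ S → NeighClosed G r S → ∀ v : V, v ∈ S

/-- `mVertex G r` is the minimum size of a percolating set of vertices for the `r`-neighbour
bootstrap process, i.e. `m(G,r)`. -/
noncomputable def mVertex {V : Type*} (G : SimpleGraph V) (r : ℕ) : ℕ :=
  sInf {n | ∃ A : Finset V, NeighPercolates G r ↑A ∧ A.card = n}

/-- `c` is a proper edge colouring of `G`: distinct edges sharing an endpoint get distinct
colours. -/
def ProperEdgeColouring {V : Type*} (G : SimpleGraph V) (c : Sym2 V → ℝ) : Prop :=
  ∀ e₁ ∈ G.edgeSet, ∀ e₂ ∈ G.edgeSet, e₁ ≠ e₂ → (∃ v : V, v ∈ e₁ ∧ v ∈ e₂) → c e₁ ≠ c e₂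

/-- The space `W^r_{G,c}` of functions on edges recognized by systems of polynomials of degree
at most `r - 1` (degree `< r`) attached to the vertices. Functions are represented as functions
on `Sym2 V` vanishing outside the edge set of `G`. -/
noncomputable def Wspace {V : Type*} (G : SimpleGraph V) (c : Sym2 V → ℝ) (r : ℕ) :
    Submodule ℝ (Sym2 V → ℝ) where
  carrier := {φ | (∀ e, e ∉ G.edgeSet → φ e = 0) ∧
    ∃ p : V → ℝ[X], (∀ v, (p v).degree < (r : WithBot ℕ)) ∧
      ∀ v w : V, G.Adj v w → (p v).eval (c s(v, w)) = φ s(v, w)}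
  zero_mem' := ⟨fun _ _ => rfl, fun _ => 0,
    fun _ => by simp [Polynomial.degree_zero], fun _ _ _ => by simp⟩
  add_mem' := by
    rintro φ ψ ⟨hφ0, p, hp, hpe⟩ ⟨hψ0, q, hq, hqe⟩
    exact ⟨fun e he => by simp [hφ0 e he, hψ0 e he], fun v => p v + q v,
      fun v => lt_of_le_of_lt (Polynomial.degree_add_le _ _) (max_lt (hp v) (hq v)),
      fun v w hvw => by simp [hpe v w hvw, hqe v w hvw]⟩
  smul_mem' := by
    rintro a φ ⟨hφ0, p, hp, hpe⟩
    exact ⟨fun e he => by simp [hφ0 e he], fun v => a • p v,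
      fun v => lt_of_le_of_lt (Polynomial.degree_smul_le _ _) (hp v),
      fun v w hvw => by simp [hpe v w hvw]⟩

/-- `degCount G t` is the number of vertices of `G` of degree exactly `t`. -/
noncomputable def degCount {V : Type*} (G : SimpleGraph V) (t : ℕ) : ℕ :=
  {v : V | (G.neighborSet v).ncard = t}.ncard

/-!
View `G □ C_k` as `k` layers (copies of `G`) joined by rungs `(v, i) — (v, i + 1)`. Seed layer `0`
with an `r`-percolating set of `G`, layers `1, …, k - 2` with `(r - 1)`-percolating sets and
layer `k - 1` with an `(r - 2)`-percolating set; add the rung `(v, 0) — (v, 1)` at every vertex of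
degree `r - 1`, and all `k` rungs at every vertex of degree `< r - 1`.

Layer `0` fills up, after which every vertex of it sees `r` infected edges, so both of its rungs
are infected. Going up, each middle layer has an infected rung below every vertex and so behaves
like `G` with threshold `r - 1`; once it is full, its vertices infect the rung above. The last
layer has two infected rungs at every vertex (from layers `k - 2` and `0`), so threshold `r - 2`
suffices there. Counting the seeds gives the bound.
-/

open SimpleGraph Finset

section

variable {V : Type*}

theorem exists_bondPercolates_card_eq_mEdge [Finite V] (G : SimpleGraph V) (r : ℕ) :
    ∃ F : Finset (Sym2 V), ↑F ⊆ G.edgeSet ∧ BondPercolates G r ↑F ∧ #F = mEdge G r := by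
  have hne :
      {n | ∃ F : Finset (Sym2 V), ↑F ⊆ G.edgeSet ∧ BondPercolates G r ↑F ∧ #F = n}.Nonempty :=
    ⟨_, G.edgeSet.toFinite.toFinset, by simp, fun _ hS _ => by simpa using hS, rfl⟩
  exact Nat.sInf_mem hne

theorem mEdge_le_card {G : SimpleGraph V} {r : ℕ} {F : Finset (Sym2 V)} (hFG : ↑F ⊆ G.edgeSet)
    (hF : BondPercolates G r ↑F) : mEdge G r ≤ #F :=
  Nat.sInf_le ⟨F, hFG, hF, rfl⟩

theorem card_filter_ncard_neighborSet_eq [Fintype V] (G : SimpleGraph V) (t : ℕ) :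
    #{v | (G.neighborSet v).ncard = t} = degCount G t := by
  rw [degCount, ← Set.ncard_coe_finset]
  simp

theorem card_filter_ncard_neighborSet_lt [Fintype V] (G : SimpleGraph V) (m : ℕ) :
    #{v | (G.neighborSet v).ncard < m} = ∑ t ∈ range m, degCount G t := by
  rw [card_eq_sum_card_fiberwise (f := fun v => (G.neighborSet v).ncard) (t := range m)
    (fun v hv => by simpa using hv)]
  refine sum_congr rfl fun t ht => ?_
  rw [filter_filter, ← card_filter_ncard_neighborSet_eq]
  congr 1
  ext v
  simp only [mem_filter, mem_univ, true_and, and_iff_right_iff_imp]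
  rintro rfl
  simpa using ht

section BoxProd

variable {W : Type*} [Finite V] [Finite W] {G : SimpleGraph V} {H : SimpleGraph W} {r : ℕ}
  {S : Set (Sym2 (V × W))}

theorem BondClosed.boxProd_mem_of_le_ncard (hS : BondClosed (G □ H) r S) {v : V} {i : W}
    {A : Set V} {J : Set W} (hA : A ⊆ {u | G.Adj v u ∧ s((v, i), (u, i)) ∈ S})
    (hJ : J ⊆ {j | H.Adj i j ∧ s((v, i), (v, j)) ∈ S}) (hr : r ≤ A.ncard + J.ncard)
    {x : V × W} (hx : (G □ H).Adj (v, i) x) : s((v, i), x) ∈ S := by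
  refine hS (v, i) (hr.trans ?_) x hx
  have hdisj : Disjoint ((·, i) '' A) ((v, ·) '' J) := Set.disjoint_left.2 <| by
    rintro _ ⟨u, -, rfl⟩ ⟨j, hj, h⟩
    exact (hJ hj).1.ne (congrArg Prod.snd h).symm
  rw [← Set.ncard_image_of_injective A (Prod.mk_left_injective i),
    ← Set.ncard_image_of_injective J (Prod.mk_right_injective v), ← Set.ncard_union_eq hdisj]
  refine Set.ncard_le_ncard ?_
  rintro _ (⟨u, hu, rfl⟩ | ⟨j, hj, rfl⟩)
  · exact ⟨boxProd_adj_left.2 (hA hu).1, (hA hu).2⟩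
  · exact ⟨boxProd_adj_right.2 (hJ hj).1, (hJ hj).2⟩

theorem BondClosed.comap_layer (hS : BondClosed (G □ H) r S) (i : W) {r' : ℕ}
    (J : V → Set W) (hJ : ∀ v, J v ⊆ {j | H.Adj i j ∧ s((v, i), (v, j)) ∈ S})
    (hr : ∀ v, r ≤ r' + (J v).ncard) : BondClosed G r' (Sym2.map (·, i) ⁻¹' S) :=
  fun v hv _ hvw => hS.boxProd_mem_of_le_ncard (fun _ hu => hu) (hJ v)
    ((hr v).trans (Nat.add_le_add_right hv _)) (boxProd_adj_left.2 hvw)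

theorem BondClosed.boxProd_mem_of_layer (hS : BondClosed (G □ H) r S) {i : W}
    (hL : G.edgeSet ⊆ Sym2.map (·, i) ⁻¹' S) {v : V} {J : Set W}
    (hJ : J ⊆ {j | H.Adj i j ∧ s((v, i), (v, j)) ∈ S})
    (hr : r ≤ (G.neighborSet v).ncard + J.ncard) {x : V × W} (hx : (G □ H).Adj (v, i) x) :
    s((v, i), x) ∈ S :=
  hS.boxProd_mem_of_le_ncard (fun _ hu => ⟨hu, hL (G.mem_edgeSet.2 hu)⟩) hJ hr hx

theorem BondClosed.boxProd_mem_of_layer_of_mem (hS : BondClosed (G □ H) r S) {i j j' : W}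
    (hL : G.edgeSet ⊆ Sym2.map (·, i) ⁻¹' S) {v : V} (hv : r ≤ (G.neighborSet v).ncard + 1)
    (hj : H.Adj i j) (hjS : s((v, i), (v, j)) ∈ S) (hj' : H.Adj i j') : s((v, i), (v, j')) ∈ S :=
  hS.boxProd_mem_of_layer hL (J := {j}) (by simpa using ⟨hj, hjS⟩) (by simpa using hv)
    (boxProd_adj_right.2 hj')

end BoxProd

section Cycle

open Fin.NatCast

variable {k : ℕ} [NeZero k]

theorem cycleGraph_adj_add_one (hk : 2 ≤ k) (i : Fin k) : (cycleGraph k).Adj i (i + 1) := by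
  obtain ⟨n, rfl⟩ := Nat.exists_eq_add_of_le' hk
  simp [cycleGraph_adj]

theorem cycleGraph_adj_iff_eq_add_one (hk : 2 ≤ k) {i j : Fin k} :
    (cycleGraph k).Adj i j ↔ j = i + 1 ∨ i = j + 1 := by
  obtain ⟨n, rfl⟩ := Nat.exists_eq_add_of_le' hk
  rw [← mem_neighborSet, cycleGraph_neighborSet]
  simp only [Set.mem_insert_iff, Set.mem_singleton_iff, eq_sub_iff_add_eq, eq_comm (a := i)]
  tauto

theorem Fin.natCast_sub_one_add_one : ((k - 1 : ℕ) : Fin k) + 1 = 0 := by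
  rw [← Nat.cast_add_one, Nat.sub_add_cancel NeZero.one_le, Fin.natCast_self]

theorem Fin.add_one_add_one_ne_self (hk : 3 ≤ k) (i : Fin k) : i + 1 + 1 ≠ i := by
  obtain ⟨n, rfl⟩ := Nat.exists_eq_add_of_le' hk
  rw [add_assoc, Ne, add_eq_left]
  simp [Fin.ext_iff, Fin.val_add, Nat.mod_eq_of_lt]

variable {G : SimpleGraph V} {r : ℕ} {S : Set (Sym2 (V × Fin k))}

theorem edgeSet_boxProd_cycleGraph_subset (hk : 2 ≤ k)
    (hL : ∀ i, G.edgeSet ⊆ Sym2.map (·, i) ⁻¹' S) (hR : ∀ v i, s((v, i), (v, i + 1)) ∈ S) :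
    (G □ cycleGraph k).edgeSet ⊆ S := by
  intro e he
  induction e using Sym2.ind with | _ x y => ?_
  obtain ⟨v, i⟩ := x
  obtain ⟨w, j⟩ := y
  have hadj : G.Adj v w ∧ i = j ∨ (cycleGraph k).Adj i j ∧ v = w := he
  rcases hadj with ⟨hvw, rfl⟩ | ⟨hij, rfl⟩
  · exact hL i (G.mem_edgeSet.2 hvw)
  · rcases (cycleGraph_adj_iff_eq_add_one hk).1 hij with rfl | rfl
    · exact hR v i
    · rw [Sym2.eq_swap]
      exact hR v j

variable [Finite V]

theorem BondClosed.layer_add_one_of_rung (hk : 2 ≤ k) (hS : BondClosed (G □ cycleGraph k) r S)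
    {i : Fin k} {F : Set (Sym2 V)} (hF : BondPercolates G (r - 1) F)
    (hFS : F ⊆ Sym2.map (·, i + 1) ⁻¹' S) (hR : ∀ v, s((v, i), (v, i + 1)) ∈ S) :
    G.edgeSet ⊆ Sym2.map (·, i + 1) ⁻¹' S :=
  hF _ hFS <| hS.comap_layer (i + 1) (fun _ => {i})
    (fun v => by simpa using ⟨(cycleGraph_adj_add_one hk i).symm, Sym2.eq_swap ▸ hR v⟩)
    (fun _ => by simp; omega)

theorem BondClosed.rung_add_one (hk : 2 ≤ k) (hS : BondClosed (G □ cycleGraph k) r S)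
    {i : Fin k} (hL : G.edgeSet ⊆ Sym2.map (·, i + 1) ⁻¹' S)
    (hlow : ∀ v, (G.neighborSet v).ncard < r - 1 → ∀ i, s((v, i), (v, i + 1)) ∈ S)
    (hR : ∀ v, s((v, i), (v, i + 1)) ∈ S) (v : V) : s((v, i + 1), (v, i + 1 + 1)) ∈ S := by
  by_cases hv : (G.neighborSet v).ncard < r - 1
  · exact hlow v hv _
  · exact hS.boxProd_mem_of_layer_of_mem hL (by omega) (cycleGraph_adj_add_one hk i).symm
      (Sym2.eq_swap ▸ hR v) (cycleGraph_adj_add_one hk _)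

theorem BondClosed.layer_add_one_of_two_rungs (hk : 3 ≤ k)
    (hS : BondClosed (G □ cycleGraph k) r S) {i : Fin k} {F : Set (Sym2 V)}
    (hF : BondPercolates G (r - 2) F) (hFS : F ⊆ Sym2.map (·, i + 1) ⁻¹' S)
    (hR : ∀ v, s((v, i), (v, i + 1)) ∈ S) (hR' : ∀ v, s((v, i + 1), (v, i + 1 + 1)) ∈ S) :
    G.edgeSet ⊆ Sym2.map (·, i + 1) ⁻¹' S := by
  have hadj := cycleGraph_adj_add_one (k := k) (by omega)
  refine hF _ hFS <| hS.comap_layer (i + 1) (fun _ => {i, i + 1 + 1}) (fun v => ?_) (fun _ => ?_)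
  · simpa [Set.insert_subset_iff] using ⟨⟨(hadj i).symm, Sym2.eq_swap ▸ hR v⟩, hadj _, hR' v⟩
  · rw [Set.ncard_pair (Fin.add_one_add_one_ne_self hk i).symm]
    omega

theorem BondClosed.rungs_of_layer (hk : 2 ≤ k) (hS : BondClosed (G □ cycleGraph k) r S)
    {i : Fin k} (hL : G.edgeSet ⊆ Sym2.map (·, i + 1) ⁻¹' S)
    (hlow : ∀ v, (G.neighborSet v).ncard < r - 1 → ∀ i, s((v, i), (v, i + 1)) ∈ S)
    (hseed : ∀ v, (G.neighborSet v).ncard = r - 1 → s((v, i + 1), (v, i + 1 + 1)) ∈ S)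
    (v : V) : s((v, i), (v, i + 1)) ∈ S ∧ s((v, i + 1), (v, i + 1 + 1)) ∈ S := by
  have hadj := cycleGraph_adj_add_one hk
  rcases lt_or_ge (G.neighborSet v).ncard (r - 1) with hv | hv
  · exact ⟨hlow v hv i, hlow v hv (i + 1)⟩
  have hup : s((v, i + 1), (v, i + 1 + 1)) ∈ S := by
    rcases hv.eq_or_lt with hv | hv
    · exact hseed v hv.symm
    · exact hS.boxProd_mem_of_layer hL (J := ∅) (by simp) (by simp; omega)
        (boxProd_adj_right.2 (hadj _))
  refine ⟨?_, hup⟩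
  rw [Sym2.eq_swap]
  exact hS.boxProd_mem_of_layer_of_mem hL (by omega) (hadj _) hup (hadj i).symm

theorem BondClosed.layer_and_rung_of_succ_lt (hk : 2 ≤ k)
    (hS : BondClosed (G □ cycleGraph k) r S)
    {F : Set (Sym2 V)} (hF : BondPercolates G (r - 1) F)
    (hFS : ∀ n, 0 < n → n < k - 1 → F ⊆ Sym2.map (·, (n : Fin k)) ⁻¹' S)
    (hlow : ∀ v, (G.neighborSet v).ncard < r - 1 → ∀ i, s((v, i), (v, i + 1)) ∈ S)
    (hL0 : G.edgeSet ⊆ Sym2.map (·, 0) ⁻¹' S) (hR0 : ∀ v, s((v, 0), (v, 1)) ∈ S) :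
    ∀ n, n + 1 < k → G.edgeSet ⊆ Sym2.map (·, (n : Fin k)) ⁻¹' S ∧
      ∀ v, s((v, (n : Fin k)), (v, (n : Fin k) + 1)) ∈ S := by
  intro n hn
  induction n with
  | zero => simpa using ⟨hL0, hR0⟩
  | succ n ih =>
    have hR := (ih (by omega)).2
    rw [Nat.cast_succ]
    have hL := hS.layer_add_one_of_rung hk hF
      (by simpa using hFS (n + 1) (by omega) (by omega)) hR
    exact ⟨hL, hS.rung_add_one hk hL hlow hR⟩

end Cycle

section Seed

open Fin.NatCast

variable [Fintype V] [DecidableEq V]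

noncomputable def boxCycleSeed (G : SimpleGraph V) (r k : ℕ) [NeZero k]
    (Fr F1 F2 : Finset (Sym2 V)) : Finset (Sym2 (V × Fin k)) :=
  Fr.image (Sym2.map (·, 0)) ∪
    (Ioo 0 (k - 1)).biUnion (fun n => F1.image (Sym2.map (·, (n : Fin k)))) ∪
    F2.image (Sym2.map (·, ((k - 1 : ℕ) : Fin k))) ∪
    ({v | (G.neighborSet v).ncard = r - 1} : Finset V).image (fun v => s((v, 0), (v, 1))) ∪
    (({v | (G.neighborSet v).ncard < r - 1} : Finset V) ×ˢ univ).image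
      fun p => s((p.1, p.2), (p.1, p.2 + 1))

variable {k : ℕ} [NeZero k]

theorem card_boxCycleSeed_le (G : SimpleGraph V) (r : ℕ) (Fr F1 F2 : Finset (Sym2 V)) :
    #(boxCycleSeed G r k Fr F1 F2) ≤ #Fr + (k - 2) * #F1 + #F2 + degCount G (r - 1)
      + k * ∑ t ∈ range (r - 1), degCount G t := by
  have hmid : #((Ioo 0 (k - 1)).biUnion fun n => F1.image (Sym2.map (·, (n : Fin k))))
      ≤ (k - 2) * #F1 := by
    grw [card_biUnion_le, sum_le_sum fun _ _ => card_image_le, sum_const, Nat.card_Ioo,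
      smul_eq_mul]
    exact Nat.mul_le_mul_right _ (by omega)
  have hlow : #((({v | (G.neighborSet v).ncard < r - 1} : Finset V) ×ˢ univ).image
      fun p : V × Fin k => s((p.1, p.2), (p.1, p.2 + 1)))
      ≤ k * ∑ t ∈ range (r - 1), degCount G t := by
    grw [card_image_le, card_product, card_filter_ncard_neighborSet_lt, card_univ,
      Fintype.card_fin, mul_comm]
  unfold boxCycleSeed
  grw [card_union_le, card_union_le, card_union_le, card_union_le, card_image_le, card_image_le,
    hmid, card_image_le, card_filter_ncard_neighborSet_eq, hlow]

theorem boxCycleSeed_subset_edgeSet (hk : 2 ≤ k) {G : SimpleGraph V} {r : ℕ}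
    {Fr F1 F2 : Finset (Sym2 V)} (hFr : ↑Fr ⊆ G.edgeSet) (hF1 : ↑F1 ⊆ G.edgeSet)
    (hF2 : ↑F2 ⊆ G.edgeSet) :
    ↑(boxCycleSeed G r k Fr F1 F2) ⊆ (G □ cycleGraph k).edgeSet := by
  have hlayer (i : Fin k) {F : Finset (Sym2 V)} (hF : ↑F ⊆ G.edgeSet) :
      ↑F ⊆ Sym2.map (·, i) ⁻¹' (G □ cycleGraph k).edgeSet :=
    fun _ he => (boxProdLeft G (cycleGraph k) i).toHom.map_mem_edgeSet (hF he)
  have hrung (v : V) (i : Fin k) : s((v, i), (v, i + 1)) ∈ (G □ cycleGraph k).edgeSet :=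
    boxProd_adj_right.2 (cycleGraph_adj_add_one hk i)
  simp only [boxCycleSeed, coe_union, Set.union_subset_iff, coe_image, Set.image_subset_iff,
    coe_biUnion, Set.iUnion₂_subset_iff]
  exact ⟨⟨⟨⟨hlayer 0 hFr, fun n _ => hlayer n hF1⟩, hlayer _ hF2⟩,
    fun v _ => by simpa using hrung v 0⟩, fun p _ => hrung p.1 p.2⟩

theorem bondPercolates_boxCycleSeed (hk : 3 ≤ k) {G : SimpleGraph V} {r : ℕ}
    {Fr F1 F2 : Finset (Sym2 V)} (hFr : BondPercolates G r ↑Fr)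
    (hF1 : BondPercolates G (r - 1) ↑F1) (hF2 : BondPercolates G (r - 2) ↑F2) :
    BondPercolates (G □ cycleGraph k) r ↑(boxCycleSeed G r k Fr F1 F2) := by
  intro S hseed hS
  simp only [boxCycleSeed, coe_union, Set.union_subset_iff, coe_image, Set.image_subset_iff,
    coe_biUnion, Set.iUnion₂_subset_iff] at hseed
  obtain ⟨⟨⟨⟨hFrS, hF1S⟩, hF2S⟩, hseedS⟩, hlowS⟩ := hseed
  have hlow : ∀ v, (G.neighborSet v).ncard < r - 1 → ∀ i, s((v, i), (v, i + 1)) ∈ S :=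
    fun v hv i => hlowS (mk_mem_product (by simpa using hv) (mem_univ i))
  have hlast : ((k - 1 : ℕ) : Fin k) + 1 = 0 := Fin.natCast_sub_one_add_one
  have hL0 : G.edgeSet ⊆ Sym2.map (·, 0) ⁻¹' S :=
    hFr _ hFrS (hS.comap_layer 0 (fun _ => ∅) (by simp) (by simp))
  have hR0 := hS.rungs_of_layer (by omega) (hlast ▸ hL0) hlow
    (fun v hv => by simpa [hlast] using hseedS (by simpa using hv))
  have hmid := hS.layer_and_rung_of_succ_lt (by omega) hF1
    (fun n h0 h1 => hF1S n (by simp [h0, h1])) hlow hL0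
    (by simpa [hlast] using fun v => (hR0 v).2)
  have hpred : ((k - 2 : ℕ) : Fin k) + 1 = ((k - 1 : ℕ) : Fin k) := by
    rw [← Nat.cast_succ]
    congr 1
    omega
  have hLlast := hS.layer_add_one_of_two_rungs hk hF2 (hpred ▸ hF2S)
    (hmid (k - 2) (by omega)).2 (hpred ▸ fun v => (hR0 v).1)
  have hcases : ∀ i : Fin k, (∃ n, n + 1 < k ∧ (n : Fin k) = i) ∨ i = ((k - 1 : ℕ) : Fin k) := by
    intro i
    rcases Nat.lt_or_ge (i.val + 1) k with hi | hi
    · exact .inl ⟨i, hi, Fin.cast_val_eq_self i⟩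
    · exact .inr (by rw [← Fin.cast_val_eq_self i]; congr; omega)
  refine edgeSet_boxProd_cycleGraph_subset (by omega) (fun i => ?_) (fun v i => ?_)
  · rcases hcases i with ⟨n, hn, rfl⟩ | rfl
    exacts [(hmid n hn).1, hpred ▸ hLlast]
  · rcases hcases i with ⟨n, hn, rfl⟩ | rfl
    exacts [(hmid n hn).2 v, (hR0 v).1]

end Seed

end

/-- `r - 2` truncates to `0` when `r = 1`, and `mEdge G 0 = 0`. -/
theorem stmt5_general {V : Type*} [Fintype V] (G : SimpleGraph V) (r k : ℕ)
    (hk : 3 ≤ k) :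
    mEdge (G.boxProd (SimpleGraph.cycleGraph k)) r ≤
      mEdge G r + (k - 2) * mEdge G (r - 1) + mEdge G (r - 2) + degCount G (r - 1)
        + k * ∑ t ∈ Finset.range (r - 1), degCount G t := by
  classical
  have : NeZero k := ⟨by omega⟩
  obtain ⟨Fr, hFrG, hFr, hFr_card⟩ := exists_bondPercolates_card_eq_mEdge G r
  obtain ⟨F1, hF1G, hF1, hF1_card⟩ := exists_bondPercolates_card_eq_mEdge G (r - 1)
  obtain ⟨F2, hF2G, hF2, hF2_card⟩ := exists_bondPercolates_card_eq_mEdge G (r - 2)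
  rw [← hFr_card, ← hF1_card, ← hF2_card]
  calc mEdge (G □ cycleGraph k) r ≤ #(boxCycleSeed G r k Fr F1 F2) :=
        mEdge_le_card (boxCycleSeed_subset_edgeSet (by omega) hFrG hF1G hF2G)
          (bondPercolates_boxCycleSeed hk hFr hF1 hF2)
    _ ≤ _ := card_boxCycleSeed_le G r Fr F1 F2

/-- Upper bound for `m_e(G □ C_k, r)`. Here `r - 2 = 0` when `r = 1`,
and `mEdge G 0 = 0`, matching the convention that the corresponding term vanishes;
the sum over `t ∈ range (r-1)` is `d_0 + ⋯ + d_{r-2}` and is empty when `r = 1`. -/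
theorem stmt5 {V : Type*} [Fintype V] (G : SimpleGraph V) (r k : ℕ) (hr : 1 ≤ r)
    (hk : 3 ≤ k) :
    mEdge (G.boxProd (SimpleGraph.cycleGraph k)) r ≤
      mEdge G r + (k - 2) * mEdge G (r - 1) + mEdge G (r - 2) + degCount G (r - 1)
        + k * ∑ t ∈ Finset.range (r - 1), degCount G t :=
  stmt5_general G r k hk
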